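/- In the upper-triangular array setting, the bottom-left k×s block of Q'(θ₀) · Q(θ₀)ᵀ (the block formed by the last k rows and the first s columns) equals −Y · R11(θ₀)⁻¹. -/

import Mathlib

open Matrix

/-- Strictly lower-triangular part of a square matrix. -/
noncomputable def strictLowerPart {s : ℕ} (M : Matrix (Fin s) (Fin s) ℝ) :
    Matrix (Fin s) (Fin s) ℝ :=
  Matrix.of fun i j => if j < i then M i j else 0

/-- Diagonal part of a square matrix. -/
noncomputable def diagPart {s : ℕ} (M : Matrix (Fin s) (Fin s) ℝ) :
    Matrix (Fin s) (Fin s) ℝ :=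
  Matrix.of fun i j => if i = j then M i j else 0

/-- Strictly upper-triangular part of a square matrix. -/
noncomputable def strictUpperPart {s : ℕ} (M : Matrix (Fin s) (Fin s) ℝ) :
    Matrix (Fin s) (Fin s) ℝ :=
  Matrix.of fun i j => if i < j then M i j else 0

/-!
Differentiating `Q A = [[R11, R12], [0, R22]]` gives `Q' A + Q A'` with vanishing bottom-left
block. Since `Q` is orthogonal, `Q' A = (Q' Qᵀ) (Q A)`, whose bottom-left block is
`(Q' Qᵀ)₂₁ R11` because `Q A` is block upper triangular. Hence `(Q' Qᵀ)₂₁ R11 + Y = 0`,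
and `R11` is invertible.
-/

namespace Matrix

variable {m n p q α : Type*}

section Derivative

variable {𝕜 : Type*} [NontriviallyNormedField 𝕜]

theorem hasDerivAt_mul_apply [Fintype n] {A : 𝕜 → Matrix m n 𝕜} {B : 𝕜 → Matrix n p 𝕜}
    {A' : Matrix m n 𝕜} {B' : Matrix n p 𝕜} {t : 𝕜}
    (hA : ∀ i j, HasDerivAt (fun t => A t i j) (A' i j) t)
    (hB : ∀ i j, HasDerivAt (fun t => B t i j) (B' i j) t) (i : m) (j : p) :
    HasDerivAt (fun t => (A t * B t) i j) ((A' * B t + A t * B') i j) t := by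
  simp only [mul_apply, add_apply, ← Finset.sum_add_distrib]
  exact HasDerivAt.fun_sum fun x _ => (hA i x).mul (hB x j)

theorem toBlocks₂₁_eq_zero_of_hasDerivAt {F : 𝕜 → Matrix (m ⊕ n) (p ⊕ q) 𝕜}
    {F' : Matrix (m ⊕ n) (p ⊕ q) 𝕜} {t : 𝕜}
    (hF : ∀ i j, HasDerivAt (fun t => F t i j) (F' i j) t)
    (hzero : ∀ t, (F t).toBlocks₂₁ = 0) :
    F'.toBlocks₂₁ = 0 := by
  ext i j
  have hconst : (fun t => F t (.inr i) (.inl j)) = fun _ => 0 :=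
    funext fun t => congr_fun₂ (hzero t) i j
  have hderiv := hF (.inr i) (.inl j)
  rw [hconst] at hderiv
  exact hderiv.unique (hasDerivAt_const t 0)

end Derivative

theorem toBlocks₂₁_mul_fromBlocks_zero [Fintype p] [Fintype q] [NonUnitalNonAssocSemiring α]
    {r c : Type*} (M : Matrix (m ⊕ n) (p ⊕ q) α) (A : Matrix p r α) (B : Matrix p c α)
    (D : Matrix q c α) :
    (M * fromBlocks A B 0 D).toBlocks₂₁ = M.toBlocks₂₁ * A := by
  rw [← fromBlocks_toBlocks M, fromBlocks_multiply]
  simp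

theorem eq_neg_mul_nonsing_inv_of_mul_add_eq_zero [Fintype n] [DecidableEq n] [CommRing α]
    {M : Matrix m n α} {R : Matrix n n α} {Y : Matrix m n α} (h : M * R + Y = 0)
    (hR : IsUnit R) :
    M = -(Y * R⁻¹) := by
  have hdet : IsUnit R.det := (isUnit_iff_isUnit_det R).mp hR
  rw [← Matrix.neg_mul, ← eq_neg_of_add_eq_zero_left h, mul_nonsing_inv_cancel_right R M hdet]

end Matrix

theorem upperTriangularCase_block21_of_skew_general
    (s k l : ℕ)
    (A A' : ℝ → Matrix (Fin s ⊕ Fin k) (Fin s ⊕ Fin l) ℝ)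
    (Q Q' : ℝ → Matrix (Fin s ⊕ Fin k) (Fin s ⊕ Fin k) ℝ)
    (hA : ∀ θ i j, HasDerivAt (fun t => A t i j) (A' θ i j) θ)
    (hQ : ∀ θ i j, HasDerivAt (fun t => Q t i j) (Q' θ i j) θ)
    (hQorth : ∀ θ, Q θ * (Q θ)ᵀ = 1)
    (R11 : ℝ → Matrix (Fin s) (Fin s) ℝ)
    (R12 : ℝ → Matrix (Fin s) (Fin l) ℝ)
    (R22 : ℝ → Matrix (Fin k) (Fin l) ℝ)
    (hblock : ∀ θ, Q θ * A θ = Matrix.fromBlocks (R11 θ) (R12 θ) 0 (R22 θ))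
    (hinv : ∀ θ, IsUnit (R11 θ))
    (θ₀ : ℝ)
    (X : Matrix (Fin s) (Fin s) ℝ) (N : Matrix (Fin s) (Fin l) ℝ)
    (Y : Matrix (Fin k) (Fin s) ℝ) (V : Matrix (Fin k) (Fin l) ℝ)
    (hXNYV : Q θ₀ * A' θ₀ = Matrix.fromBlocks X N Y V) :
    (Q' θ₀ * (Q θ₀)ᵀ).toBlocks₂₁ = -(Y * (R11 θ₀)⁻¹) := by
  have hQ'A : Q' θ₀ * A θ₀ = Q' θ₀ * (Q θ₀)ᵀ * (Q θ₀ * A θ₀) := by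
    rw [Matrix.mul_assoc, ← Matrix.mul_assoc (Q θ₀)ᵀ, mul_eq_one_comm.mp (hQorth θ₀),
      Matrix.one_mul]
  have hvanish : (Q' θ₀ * A θ₀).toBlocks₂₁ + (Q θ₀ * A' θ₀).toBlocks₂₁ = 0 :=
    toBlocks₂₁_eq_zero_of_hasDerivAt (hasDerivAt_mul_apply (hQ θ₀) (hA θ₀))
      fun t => by rw [hblock t, toBlocks_fromBlocks₂₁]
  rw [hQ'A, hblock θ₀, hXNYV, toBlocks₂₁_mul_fromBlocks_zero,
    toBlocks_fromBlocks₂₁] at hvanish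
  exact eq_neg_mul_nonsing_inv_of_mul_add_eq_zero hvanish (hinv θ₀)

/-- Upper triangular array case: the bottom-left `k × s` block of `Q' θ₀ * (Q θ₀)ᵀ`
equals `−Y * (R11 θ₀)⁻¹`. -/
theorem upperTriangularCase_block21_of_skew
    (s k l : ℕ) (hs : 0 < s)
    (A A' : ℝ → Matrix (Fin s ⊕ Fin k) (Fin s ⊕ Fin l) ℝ)
    (Q Q' : ℝ → Matrix (Fin s ⊕ Fin k) (Fin s ⊕ Fin k) ℝ)
    (hA : ∀ θ i j, HasDerivAt (fun t => A t i j) (A' θ i j) θ)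
    (hQ : ∀ θ i j, HasDerivAt (fun t => Q t i j) (Q' θ i j) θ)
    (hQorth : ∀ θ, Q θ * (Q θ)ᵀ = 1)
    (R11 : ℝ → Matrix (Fin s) (Fin s) ℝ)
    (R12 : ℝ → Matrix (Fin s) (Fin l) ℝ)
    (R22 : ℝ → Matrix (Fin k) (Fin l) ℝ)
    (hblock : ∀ θ, Q θ * A θ = Matrix.fromBlocks (R11 θ) (R12 θ) 0 (R22 θ))
    (hupp : ∀ θ (i j : Fin s), j < i → R11 θ i j = 0)
    (hinv : ∀ θ, IsUnit (R11 θ))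
    (θ₀ : ℝ)
    (X : Matrix (Fin s) (Fin s) ℝ) (N : Matrix (Fin s) (Fin l) ℝ)
    (Y : Matrix (Fin k) (Fin s) ℝ) (V : Matrix (Fin k) (Fin l) ℝ)
    (hXNYV : Q θ₀ * A' θ₀ = Matrix.fromBlocks X N Y V) :
    (Q' θ₀ * (Q θ₀)ᵀ).toBlocks₂₁ = -(Y * (R11 θ₀)⁻¹) :=
  upperTriangularCase_block21_of_skew_general s k l A A' Q Q' hA hQ hQorth R11 R12 R22 hblock hinv
    θ₀ X N Y V hXNYV
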